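/- Let S ⊂ ℝⁿ be closed nonempty, and let Q_κ = Q(x_κ, r_κ) be a Whitney cube of ℝⁿ \ S with metric projection x̃_κ of x_κ onto S. Then for every c > 1 and every λ ∈ (0, 1/c), the set Q(x̃_κ, r_κ(c−1)/c) ∩ S is contained in S_{k(κ)}(λ), where k(κ) is the integer with r_κ = 2^{-k(κ)}; in particular x̃_κ ∈ S_j(λ) for every j ≥ k(κ) and every λ ∈ (0,1). -/

import Mathlib

open Metric Set MeasureTheory
open scoped ENNReal NNReal

/-- The maximal `2^{-j}`-porous subset `S_j(λ)` of `S`: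
points `x ∈ S` for which there is `y ∈ Q(x, 2^{-j})` with `Q(y, λ 2^{-j}) ⊆ ℝⁿ \ S`. -/
def porousSubset (n : ℕ) (S : Set (Fin n → ℝ)) (j : ℕ) (lam : ℝ) : Set (Fin n → ℝ) :=
  {x ∈ S | ∃ y ∈ closedBall x ((2:ℝ)^(-(j:ℤ))),
    closedBall y (lam * (2:ℝ)^(-(j:ℤ))) ⊆ Sᶜ}

/-!
If `p` is a nearest point of `S` to `x`, then every point `y` of the segment `[p, x]` has
`ball y (dist y p) ⊆ Sᶜ`, since a point of `S` in that ball would be closer to `x` than `p`.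
For a Whitney cube `Q(x_κ, r_κ)` we have `dist(x_κ, x̃_κ) ≥ 2 r_κ`, so the segment from `x̃_κ`
to `x_κ` contains, for every `s ≤ r_κ`, a point at distance `s` from `x̃_κ` whose open `s`-ball
misses `S`; taking `s = r_κ / c` or `s = 2^{-j}` gives the two porosity claims.
-/

section NearestPoint

variable {E : Type*} [NormedAddCommGroup E] [NormedSpace ℝ E] {S : Set E} {x p : E}

theorem ball_lineMap_subset_compl_of_dist_eq_infDist (hp : dist x p = infDist x S)
    {θ : ℝ} (hθ : θ ≤ 1) :
    ball (AffineMap.lineMap p x θ) (θ * dist x p) ⊆ Sᶜ := by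
  intro w hw hwS
  have hx : dist x (AffineMap.lineMap p x θ) = (1 - θ) * dist x p := by
    rw [dist_comm, dist_lineMap_right, Real.norm_of_nonneg (by linarith), dist_comm]
  have hnear : dist x p ≤ dist x w := hp ▸ infDist_le_dist_of_mem hwS
  have := dist_triangle x (AffineMap.lineMap p x θ) w
  rw [mem_ball'] at hw
  linarith

theorem exists_dist_eq_ball_subset_compl_of_dist_eq_infDist (hp : dist x p = infDist x S)
    {s : ℝ} (hs₀ : 0 ≤ s) (hs : s ≤ dist x p) :
    ∃ y, dist p y = s ∧ ball y s ⊆ Sᶜ := by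
  rcases hs₀.eq_or_lt with rfl | hs_pos
  · exact ⟨p, dist_self p, by simp⟩
  have hD : 0 < dist x p := hs_pos.trans_le hs
  have hθs : s / dist x p * dist x p = s := div_mul_cancel₀ s hD.ne'
  refine ⟨AffineMap.lineMap p x (s / dist x p), ?_, ?_⟩
  · rw [dist_comm, dist_lineMap_left, Real.norm_of_nonneg (by positivity), dist_comm p x, hθs]
  · simpa only [hθs] using
      ball_lineMap_subset_compl_of_dist_eq_infDist hp ((div_le_one hD).2 hs)

end NearestPoint

theorem mem_porousSubset_of_ball_subset_compl {n : ℕ} {S : Set (Fin n → ℝ)} {j : ℕ}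
    {lam s : ℝ} {x y : Fin n → ℝ} (hx : x ∈ S) (hxy : dist x y ≤ (2:ℝ)^(-(j:ℤ)))
    (hlam : lam * (2:ℝ)^(-(j:ℤ)) < s) (hy : ball y s ⊆ Sᶜ) :
    x ∈ porousSubset n S j lam :=
  ⟨hx, y, mem_closedBall'.2 hxy, (closedBall_subset_ball hlam).trans hy⟩

theorem statement17_general (n : ℕ) (S : Set (Fin n → ℝ))
    (xc : Fin n → ℝ) (k : ℕ)
    (hlow : ∀ a ∈ closedBall xc ((2:ℝ)^(-(k:ℤ))),
      2 * (2:ℝ)^(-(k:ℤ)) ≤ Metric.infDist a S)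
    (xt : Fin n → ℝ) (hxtS : xt ∈ S) (hproj : dist xc xt = Metric.infDist xc S) :
    (∀ c : ℝ, 1 < c → ∀ lam : ℝ, 0 < lam → lam < 1/c →
      closedBall xt ((2:ℝ)^(-(k:ℤ)) * (c-1)/c) ∩ S ⊆ porousSubset n S k lam) ∧
    (∀ j : ℕ, k ≤ j → ∀ lam : ℝ, 0 < lam → lam < 1 → xt ∈ porousSubset n S j lam) := by
  set r : ℝ := (2:ℝ)^(-(k:ℤ))
  have hr : 0 < r := by positivity
  have hrD : r ≤ dist xc xt := by
    linarith [hproj ▸ hlow xc (mem_closedBall_self hr.le)]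
  constructor
  · intro c hc lam _ hlam x ⟨hxt, hxS⟩
    have hc₀ : 0 < c := by linarith
    obtain ⟨y, hy, hball⟩ := exists_dist_eq_ball_subset_compl_of_dist_eq_infDist hproj
      (s := r / c) (by positivity) ((div_le_self hr.le hc.le).trans hrD)
    refine mem_porousSubset_of_ball_subset_compl hxS ?_ ?_ hball
    · have hsplit : r * (c - 1) / c + r / c = r := by field_simp; ring
      linarith [dist_triangle x xt y, mem_closedBall.1 hxt]
    · rw [lt_div_iff₀ hc₀]
      nlinarith [(lt_div_iff₀ hc₀).1 hlam]
  · intro j hj lam _ hlam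
    have hjk : (2:ℝ)^(-(j:ℤ)) ≤ r :=
      zpow_le_zpow_right₀ (by norm_num) (neg_le_neg (by exact_mod_cast hj))
    obtain ⟨y, hy, hball⟩ := exists_dist_eq_ball_subset_compl_of_dist_eq_infDist hproj
      (by positivity) (hjk.trans hrD)
    exact mem_porousSubset_of_ball_subset_compl hxtS hy.le
      (mul_lt_of_lt_one_left (by positivity) hlam) hball

/-- Let `S ⊆ ℝⁿ` be closed nonempty and `Q_κ = Q(x_κ, r_κ)` a Whitney
cube of `ℝⁿ \ S` (so `Q_κ ⊆ ℝⁿ \ S` and `diam Q_κ ≤ dist(Q_κ, S) ≤ 4 diam Q_κ`) with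
`r_κ = 2^{-k(κ)}`, and let `x̃_κ` be a sup-norm metric projection of `x_κ` onto `S`.
Then for every `c > 1` and every `λ ∈ (0, 1/c)`,
`Q(x̃_κ, r_κ(c−1)/c) ∩ S ⊆ S_{k(κ)}(λ)`; in particular `x̃_κ ∈ S_j(λ)` for every
`j ≥ k(κ)` and every `λ ∈ (0,1)`. -/
theorem statement17 (n : ℕ) (S : Set (Fin n → ℝ)) (hS : IsClosed S) (hne : S.Nonempty)
    (xc : Fin n → ℝ) (k : ℕ)
    (hQ : closedBall xc ((2:ℝ)^(-(k:ℤ))) ⊆ Sᶜ)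
    (hlow : ∀ a ∈ closedBall xc ((2:ℝ)^(-(k:ℤ))),
      2 * (2:ℝ)^(-(k:ℤ)) ≤ Metric.infDist a S)
    (hupp : ∃ a ∈ closedBall xc ((2:ℝ)^(-(k:ℤ))),
      Metric.infDist a S ≤ 8 * (2:ℝ)^(-(k:ℤ)))
    (xt : Fin n → ℝ) (hxtS : xt ∈ S) (hproj : dist xc xt = Metric.infDist xc S) :
    (∀ c : ℝ, 1 < c → ∀ lam : ℝ, 0 < lam → lam < 1/c →
      closedBall xt ((2:ℝ)^(-(k:ℤ)) * (c-1)/c) ∩ S ⊆ porousSubset n S k lam) ∧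
    (∀ j : ℕ, k ≤ j → ∀ lam : ℝ, 0 < lam → lam < 1 → xt ∈ porousSubset n S j lam) :=
  statement17_general n S xc k hlow xt hxtS hproj
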